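/- Let n ≥ 3 be an integer and 1 ≤ q ≤ ∞, and set a = (n−1)^{1/q} and b = 2^{1/q} (so 1 ≤ b ≤ 2 and b ≤ a). Then (2a²(a+1)) / ((2(a+1)² − (2a+1)b)(2a² + 2a + 1)) · (1 + (1/(n−1)) · a(2a+1)/(2(a+1)² − (2a+1)b))^{n−1} < 1. (This is the value φ(R) at R = 1/(2a+2) of the Nourein function φ(x) = a² x³/((1 − mx + bx²)(1 − (a+2)x + x²)) · (1 + (1/(n−1)) · a(x − x²)/(1 − mx + bx²))^{n−1} with m = a + b + 1.) -/

import Mathlib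

open Polynomial Filter Finset Function Metric

noncomputable section

/-- Weierstrass correction `W_i(z) = f(z_i) / ∏_{j ≠ i} (z_i - z_j)`. -/
def Wc {n : ℕ} (f : Polynomial ℂ) (z : Fin n → ℂ) (i : Fin n) : ℂ :=
  f.eval (z i) / ∏ j ∈ univ.erase i, (z i - z j)

/-- `d_i(z) = min_{j ≠ i} |z_i - z_j|`. -/
def dd {n : ℕ} (z : Fin n → ℂ) (i : Fin n) : ℝ :=
  ⨅ j : {j : Fin n // j ≠ i}, ‖z i - z j.1‖

/-- The `p`-norm on `ℂⁿ` for `p ∈ [1, ∞]`. -/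
def pnorm {n : ℕ} (p : ENNReal) (v : Fin n → ℂ) : ℝ :=
  if p = ⊤ then ⨆ i, ‖v i‖
  else (∑ i, ‖v i‖ ^ p.toReal) ^ (1 / p.toReal)

/-- `E(z) = ‖(W_1(z)/d_1(z), …, W_n(z)/d_n(z))‖_p`. -/
def Ep {n : ℕ} (p : ENNReal) (f : Polynomial ℂ) (z : Fin n → ℂ) : ℝ :=
  pnorm p (fun i => Wc f z i / (dd z i : ℂ))

/-- `a = (n-1)^{1/q}` (with `t^{1/∞} = 1`). -/
def aa (n : ℕ) (q : ENNReal) : ℝ := ((n : ℝ) - 1) ^ (1 / q).toReal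

/-- `b = 2^{1/q}` (with `2^{1/∞} = 1`). -/
def bb (q : ENNReal) : ℝ := (2 : ℝ) ^ (1 / q).toReal

/-- `ξ` is a root-vector of `f` iff `f = ∏ (X - ξᵢ)`. -/
def IsRootVec {n : ℕ} (f : Polynomial ℂ) (ξ : Fin n → ℂ) : Prop :=
  f = ∏ i, (X - Polynomial.C (ξ i))

/-- Denominator in Ehrlich's iteration function. -/
def ehrlichDen {n : ℕ} (f : Polynomial ℂ) (z : Fin n → ℂ) (i : Fin n) : ℂ :=
  1 + ∑ j ∈ univ.erase i, Wc f z j / (z i - z j)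

/-- Ehrlich's iteration function. -/
def ehrlichF {n : ℕ} (f : Polynomial ℂ) (z : Fin n → ℂ) : Fin n → ℂ :=
  fun i => z i - Wc f z i / ehrlichDen f z i

/-- Ehrlich's iterative sequence `z^{k+1} = F(z^k)`. -/
def EhrlichSeq {n : ℕ} (f : Polynomial ℂ) (z0 : Fin n → ℂ) (k : ℕ) : Fin n → ℂ :=
  (ehrlichF f)^[k] z0

/-- Well-definedness of Ehrlich's sequence: every iterate has pairwise distinct
components and all denominators are nonzero. -/
def EhrlichWellDef {n : ℕ} (f : Polynomial ℂ) (z0 : Fin n → ℂ) : Prop :=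
  ∀ k : ℕ, Function.Injective (EhrlichSeq f z0 k) ∧
    ∀ i, ehrlichDen f (EhrlichSeq f z0 k) i ≠ 0

/-- Denominator in Nourein's iteration function. -/
def noureinDen {n : ℕ} (f : Polynomial ℂ) (z : Fin n → ℂ) (i : Fin n) : ℂ :=
  1 + ∑ j ∈ univ.erase i, Wc f z j / (z i - z j - Wc f z i)

/-- Nourein's iteration function. -/
def noureinG {n : ℕ} (f : Polynomial ℂ) (z : Fin n → ℂ) : Fin n → ℂ :=
  fun i => z i - Wc f z i / noureinDen f z i

/-- Nourein's iterative sequence `z^{k+1} = G(z^k)`. -/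
def NoureinSeq {n : ℕ} (f : Polynomial ℂ) (z0 : Fin n → ℂ) (k : ℕ) : Fin n → ℂ :=
  (noureinG f)^[k] z0

/-- Well-definedness of Nourein's sequence. -/
def NoureinWellDef {n : ℕ} (f : Polynomial ℂ) (z0 : Fin n → ℂ) : Prop :=
  ∀ k : ℕ, Function.Injective (NoureinSeq f z0 k) ∧
    ∀ i, noureinDen f (NoureinSeq f z0 k) i ≠ 0

/-- The function `φ` of Theorem 2.1 (localization theorem). -/
def phiW (n : ℕ) (p q : ENNReal) (x : ℝ) : ℝ :=
  aa n q * x / ((1 - x) * (1 - bb q * x)) *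
    (1 + x / (((n : ℝ) - 1) ^ (1 / p).toReal * (1 - bb q * x))) ^ (n - 1)

/-- The function `φ` of the Ehrlich convergence theorem. -/
def phiE (n : ℕ) (q : ENNReal) (x : ℝ) : ℝ :=
  aa n q * x ^ 2 / ((1 - (aa n q + 1) * x) * (1 - (aa n q + bb q) * x)) *
    (1 + (1 / ((n : ℝ) - 1)) * (aa n q * x / (1 - (aa n q + bb q) * x))) ^ (n - 1)

/-- The function `ψ` of the Ehrlich convergence theorem. -/
def psiE (n : ℕ) (q : ENNReal) (x : ℝ) : ℝ :=
  (1 - (aa n q + bb q) * x) / (1 - aa n q * x)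

/-- The function `μ` of the Ehrlich convergence theorem. -/
def muE (n : ℕ) (q : ENNReal) (x : ℝ) : ℝ := 1 / (1 - aa n q * x)

/-- The function `φ` of the Nourein convergence theorem (with `m = a + b + 1`). -/
def phiN (n : ℕ) (q : ENNReal) (x : ℝ) : ℝ :=
  aa n q ^ 2 * x ^ 3 /
      ((1 - (aa n q + bb q + 1) * x + bb q * x ^ 2) * (1 - (aa n q + 2) * x + x ^ 2)) *
    (1 + (1 / ((n : ℝ) - 1)) *
        (aa n q * (x - x ^ 2) / (1 - (aa n q + bb q + 1) * x + bb q * x ^ 2))) ^ (n - 1)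

/-- The function `ψ` of the Nourein convergence theorem. -/
def psiN (n : ℕ) (q : ENNReal) (x : ℝ) : ℝ :=
  (1 - (aa n q + bb q + 1) * x + bb q * x ^ 2) / (1 - (aa n q + 1) * x)

/-- The function `μ` of the Nourein convergence theorem. -/
def muN (n : ℕ) (q : ENNReal) (x : ℝ) : ℝ := (1 - x) / (1 - (aa n q + 1) * x)

/-! With `D = 2(a+1)² - (2a+1)b` and `c = a(2a+1)/D`, the prefactor is at most `3/13` and
`c ≤ 5/4` whenever `1 ≤ b ≤ 2` and `b ≤ a`; both bounds are attained at `a = b = 2`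
(`n = 3`, `q = 1`). Since `(1 + c/m)^m ≤ e^c ≤ e^{5/4} < 13/3`, the product is below `1`. -/

open Real

lemma exp_five_div_four_lt : exp (5 / 4) < 13 / 3 := by
  have h : exp (5 / 4) ^ 4 = exp 1 ^ 5 := by
    rw [← exp_nat_mul, ← exp_nat_mul]; norm_num
  have : exp (5 / 4) ^ 4 < (13 / 3) ^ 4 := by
    rw [h]
    calc exp 1 ^ 5 < 3 ^ 5 := by gcongr; exact exp_one_lt_three
      _ < (13 / 3) ^ 4 := by norm_num
  exact lt_of_pow_lt_pow_left₀ 4 (by norm_num) this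

lemma one_add_mul_pow_le_exp {c : ℝ} (hc : 0 ≤ c) (m : ℕ) :
    (1 + 1 / (m : ℝ) * c) ^ m ≤ exp c := by
  convert one_sub_div_pow_le_exp_neg (n := m) (t := -c) (by linarith [m.cast_nonneg (α := ℝ)])
    using 2 <;> ring

section NoureinBound

variable {a b : ℝ}

lemma nourein_denom_pos (hb : 1 ≤ b) (hba : b ≤ a) : 0 < 2 * (a + 1) ^ 2 - (2 * a + 1) * b := by
  nlinarith

lemma nourein_ratio_le (hb1 : 1 ≤ b) (hb2 : b ≤ 2) (hba : b ≤ a) :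
    a * (2 * a + 1) / (2 * (a + 1) ^ 2 - (2 * a + 1) * b) ≤ 5 / 4 := by
  rw [div_le_iff₀ (nourein_denom_pos hb1 hba)]
  rcases le_total a 2 with h | h
  · nlinarith [mul_nonneg (by linarith : (0:ℝ) ≤ 2 - a) (by linarith : (0:ℝ) ≤ 8*a + 5)]
  · nlinarith [mul_nonneg (by linarith : (0:ℝ) ≤ 2*a + 1) (by linarith : (0:ℝ) ≤ 2 - b),
      mul_nonneg (by linarith : (0:ℝ) ≤ a) (by linarith : (0:ℝ) ≤ a - 2)]

lemma nourein_prefactor_le (hb1 : 1 ≤ b) (hb2 : b ≤ 2) (hba : b ≤ a) :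
    2 * a ^ 2 * (a + 1) /
      ((2 * (a + 1) ^ 2 - (2 * a + 1) * b) * (2 * a ^ 2 + 2 * a + 1)) ≤ 3 / 13 := by
  have hD := nourein_denom_pos hb1 hba
  have hQ : 0 < 2 * a ^ 2 + 2 * a + 1 := by nlinarith
  rw [div_le_div_iff₀ (mul_pos hD hQ) (by norm_num)]
  rcases le_total a 2 with h | h
  · nlinarith [mul_nonneg (mul_nonneg (by linarith : (0:ℝ) ≤ 2 * a + 1)
        (by linarith : (0:ℝ) ≤ a - b)) hQ.le,
      mul_nonneg (by linarith : (0:ℝ) ≤ 2 - a) (by nlinarith : (0:ℝ) ≤ 8*a^2 + 12*a + 3)]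
  · nlinarith [mul_nonneg (mul_nonneg (by linarith : (0:ℝ) ≤ 2*a + 1)
        (by linarith : (0:ℝ) ≤ 2 - b)) hQ.le,
      mul_nonneg (mul_nonneg (sq_nonneg a) (by linarith : (0:ℝ) ≤ a - 2))
        (by linarith : (0:ℝ) ≤ 6*a + 5)]

theorem nourein_phi_lt_one (hb1 : 1 ≤ b) (hb2 : b ≤ 2) (hba : b ≤ a) (m : ℕ) :
    2 * a ^ 2 * (a + 1) /
        ((2 * (a + 1) ^ 2 - (2 * a + 1) * b) * (2 * a ^ 2 + 2 * a + 1)) *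
      (1 + 1 / (m : ℝ) * (a * (2 * a + 1) / (2 * (a + 1) ^ 2 - (2 * a + 1) * b))) ^ m
      < 1 := by
  have hc : 0 ≤ a * (2 * a + 1) / (2 * (a + 1) ^ 2 - (2 * a + 1) * b) :=
    div_nonneg (by nlinarith) (nourein_denom_pos hb1 hba).le
  calc _ ≤ 3 / 13 * exp (5 / 4) := by
        refine mul_le_mul (nourein_prefactor_le hb1 hb2 hba) ?_ (by positivity) (by norm_num)
        exact (one_add_mul_pow_le_exp hc m).trans (exp_le_exp.mpr (nourein_ratio_le hb1 hb2 hba))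
    _ < 3 / 13 * (13 / 3) := by gcongr; exact exp_five_div_four_lt
    _ = 1 := by norm_num

end NoureinBound

lemma one_le_bb (q : ENNReal) : 1 ≤ bb q :=
  one_le_rpow (by norm_num) ENNReal.toReal_nonneg

lemma bb_le_two {q : ENNReal} (hq : 1 ≤ q) : bb q ≤ 2 := by
  unfold bb
  have h : (1 / q).toReal ≤ 1 :=
    ENNReal.toReal_le_of_le_ofReal zero_le_one (by simpa using ENNReal.inv_le_one.mpr hq)
  exact (rpow_le_rpow_of_exponent_le (by norm_num) h).trans_eq (rpow_one 2)

lemma bb_le_aa {n : ℕ} (hn : 3 ≤ n) (q : ENNReal) : bb q ≤ aa n q := by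
  have : (2 : ℝ) ≤ n - 1 := by
    have : (3 : ℝ) ≤ n := by exact_mod_cast hn
    linarith
  exact rpow_le_rpow (by norm_num) this ENNReal.toReal_nonneg

theorem stmt_18 (n : ℕ) (hn : 3 ≤ n) (q : ENNReal) (hq : 1 ≤ q) :
    2 * aa n q ^ 2 * (aa n q + 1) /
        ((2 * (aa n q + 1) ^ 2 - (2 * aa n q + 1) * bb q) * (2 * aa n q ^ 2 + 2 * aa n q + 1)) *
      (1 + (1 / ((n : ℝ) - 1)) *
          (aa n q * (2 * aa n q + 1) / (2 * (aa n q + 1) ^ 2 - (2 * aa n q + 1) * bb q))) ^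
        (n - 1) < 1 := by
  have h := nourein_phi_lt_one (one_le_bb q) (bb_le_two hq) (bb_le_aa hn q) (n - 1)
  rwa [Nat.cast_pred (by omega)] at h

end
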